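/- arXiv:2001.01016 — 10 statements merged into one kernel-verified Lean document; each statement's English description precedes it below -/
import Mathlib

section
/- Let α, β, γ be integers with α³ − β² = 1728γ and γ ≠ 0. If v₂(α) = 4k and v₂(γ) ≥ 12k for some nonnegative integer k, then v₂(β) = 6k, where v₂ denotes the 2-adic valuation. -/
/-- Let `α, β, γ` be integers with `α³ − β² = 1728γ` and `γ ≠ 0`. If `v₂(α) = 4k` and
`v₂(γ) ≥ 12k` for some nonnegative integer `k`, then `v₂(β) = 6k`. -/
theorem stmt_0 (α β γ : ℤ) (k : ℕ) (h : α ^ 3 - β ^ 2 = 1728 * γ) (hγ : γ ≠ 0)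
    (hα : emultiplicity (2 : ℤ) α = ((4 * k : ℕ) : ℕ∞))
    (hγ2 : ((12 * k : ℕ) : ℕ∞) ≤ emultiplicity (2 : ℤ) γ) :
    emultiplicity (2 : ℤ) β = ((6 * k : ℕ) : ℕ∞) := by
  have hp : Prime (2 : ℤ) := Int.prime_two
  have h1728 : (1728 : ℤ) = 2 ^ 6 * 27 := by norm_num
  have e27 : emultiplicity (2 : ℤ) 27 = 0 := emultiplicity_eq_zero.2 (by decide)
  have e1728γ : emultiplicity (2 : ℤ) (1728 * γ) = 6 + emultiplicity (2 : ℤ) γ := by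
    rw [h1728, mul_assoc, emultiplicity_mul hp, emultiplicity_mul hp, e27,
      emultiplicity_pow_self (by norm_num) hp.not_unit]
    ring
  have eα3 : emultiplicity (2 : ℤ) (α ^ 3) = ((12 * k : ℕ) : ℕ∞) := by
    rw [emultiplicity_pow hp, hα]
    push_cast
    ring
  have hlt : emultiplicity (2 : ℤ) (α ^ 3) < emultiplicity (2 : ℤ) (1728 * γ) := by
    rw [eα3, e1728γ]
    calc ((12 * k : ℕ) : ℕ∞) < ((6 + 12 * k : ℕ) : ℕ∞) := by exact_mod_cast by omega
  
      _ = 6 + ((12 * k : ℕ) : ℕ∞) := by push_cast; ring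
      _ ≤ 6 + emultiplicity (2 : ℤ) γ := add_le_add_right hγ2 _
  have hβ2 : emultiplicity (2 : ℤ) (β ^ 2) = ((12 * k : ℕ) : ℕ∞) := by
    have hb : β ^ 2 = -(1728 * γ - α ^ 3) := by linarith
    rw [hb, emultiplicity_neg, emultiplicity_sub_of_gt hlt, eα3]
  rw [emultiplicity_pow hp] at hβ2
  have hβfin : emultiplicity (2 : ℤ) β ≠ ⊤ := by
    intro htop
    rw [htop, ENat.mul_top (by norm_num)] at hβ2
    exact absurd hβ2.symm (by exact WithTop.natCast_ne_top _)
  lift emultiplicity (2 : ℤ) β to ℕ using hβfin with m hm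
  rw [← Nat.cast_mul, Nat.cast_inj] at hβ2
  have hm2 : m = 6 * k := by omega
  exact congrArg _ hm2
end

section
/- Let a and b be coprime integers. Then gcd of α = a⁴ + 12a³b + 14a²b² − 12ab³ + b⁴ and γ = (ab)⁵(−a² − 11ab + b²) divides 5³. -/
/-- For coprime integers `a, b`, the gcd of the `c₄`-invariant and the discriminant of
`E_{C₅}(a,b)` divides `5³`. -/
theorem stmt_4 (a b : ℤ) (hab : IsCoprime a b) :
    Int.gcd (a ^ 4 + 12 * a ^ 3 * b + 14 * a ^ 2 * b ^ 2 - 12 * a * b ^ 3 + b ^ 4)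
      ((a * b) ^ 5 * (-a ^ 2 - 11 * a * b + b ^ 2)) ∣ 5 ^ 3 := by
  set α : ℤ := a ^ 4 + 12 * a ^ 3 * b + 14 * a ^ 2 * b ^ 2 - 12 * a * b ^ 3 + b ^ 4 with hα
  set δ : ℤ := -a ^ 2 - 11 * a * b + b ^ 2 with hδ
  set G : ℤ := (Int.gcd α ((a * b) ^ 5 * δ) : ℤ) with hG
  have hGα : G ∣ α := Int.gcd_dvd_left _ _
  have hGγ : G ∣ (a * b) ^ 5 * δ := Int.gcd_dvd_right _ _
  -- a is coprime to α
  have haα : IsCoprime a α := by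
    have h1 : IsCoprime a (b ^ 4) := hab.pow_right
    have h2 : α = a * (a ^ 3 + 12 * a ^ 2 * b + 14 * a * b ^ 2 - 12 * b ^ 3) + b ^ 4 := by ring
    rw [h2, add_comm]
    exact h1.add_mul_left_right _
  -- b is coprime to α
  have hbα : IsCoprime b α := by
    have h1 : IsCoprime b (a ^ 4) := hab.symm.pow_right
    have h2 : α = b * (12 * a ^ 3 + 14 * a ^ 2 * b - 12 * a * b ^ 2 + b ^ 3) + a ^ 4 := by ring
    rw [h2, add_comm]
    exact h1.add_mul_left_right _
  have haG : IsCoprime a G := haα.of_isCoprime_of_dvd_right hGα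
  have hbG : IsCoprime b G := hbα.of_isCoprime_of_dvd_right hGα
  have habG : IsCoprime ((a * b) ^ 5) G := (haG.mul_left hbG).pow_left
  have hGδ : G ∣ δ := habG.symm.dvd_of_dvd_mul_left hGγ
  -- Bezout identities
  have h5a : G ∣ 5 * a ^ 5 := by
    have : 5 * a ^ 5 = (122 * a - 11 * b) * α +
        (117 * a ^ 3 + 166 * a ^ 2 * b - 133 * a * b ^ 2 + 11 * b ^ 3) * δ := by
      rw [hα, hδ]; ring
    rw [this]
    exact dvd_add (hGα.mul_left _) (hGδ.mul_left _)
  have hG5 : G ∣ 5 := (haG.pow_left).symm.dvd_of_dvd_mul_right h5a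
  have h125 : G ∣ 125 := hG5.trans ⟨25, by norm_num⟩
  have : (Int.gcd α ((a * b) ^ 5 * δ) : ℤ) ∣ ((5 ^ 3 : ℕ) : ℤ) := by
    simpa using h125
  exact_mod_cast this
end

section
/- Let a, b be coprime integers with a > 0. Then the discriminant γ = (ab)⁵(−a² − 11ab + b²) is the minimal discriminant of the elliptic curve y² + (a−b)xy − ab·y = x³ − ab·x²; that is, this Weierstrass equation is a global minimal model. -/
/-- Elementary 5-adic fact: if `5 ∤ a` and `5 ∤ b` then `5⁴ ∤ b² - 11ab - a²`. -/
lemma aux_five (a b : ℤ) (h5a : ¬(5:ℤ) ∣ a) (h5b : ¬(5:ℤ) ∣ b)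
    (h : (5:ℤ)^4 ∣ (-a^2 - 11*a*b + b^2)) : False := by
  have hp5 : Prime (5:ℤ) := by norm_num
  -- 5 ∣ δ hence 5 ∣ (b+2a)²
  have h5δ : (5:ℤ) ∣ (-a^2 - 11*a*b + b^2) := dvd_trans (dvd_pow_self 5 (by norm_num)) h
  have h1 : (5:ℤ) ∣ (b + 2*a)^2 := by
    obtain ⟨k, hk⟩ := h5δ
    exact ⟨k + 3*a*b + a^2, by linear_combination hk⟩
  have h2 : (5:ℤ) ∣ (b + 2*a) := hp5.dvd_of_dvd_pow h1
  obtain ⟨t, ht⟩ := h2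
  have hb : b = 5*t - 2*a := by linarith
  subst hb
  -- now δ = 25 (t² - 3at + a²)
  have h3 : (25:ℤ) ∣ (t^2 - 3*a*t + a^2) := by
    obtain ⟨k, hk⟩ := h
    refine ⟨k, mul_left_cancel₀ (by norm_num : (25:ℤ) ≠ 0) ?_⟩
    linear_combination hk
  have h4 : (5:ℤ) ∣ (t + a)^2 := by
    obtain ⟨k, hk⟩ := h3
    exact ⟨5*k + a*t, by linear_combination hk⟩
  obtain ⟨s, hs⟩ := hp5.dvd_of_dvd_pow h4
  have ht' : t = 5*s - a := by linarith
  subst ht'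
  have h6 : (5:ℤ) ∣ a^2 := by
    obtain ⟨k, hk⟩ := h3
    refine ⟨k - s^2 + a*s, mul_left_cancel₀ (by norm_num : (5:ℤ) ≠ 0) ?_⟩
    linear_combination hk
  exact h5a (hp5.dvd_of_dvd_pow h6)

/-- For coprime integers `a, b` with `a > 0`, the Weierstrass model
`y² + (a−b)xy − ab·y = x³ − ab·x²` is a global minimal model: its discriminant
`γ = (ab)⁵(−a² − 11ab + b²)` has minimal `p`-adic valuation at every prime among all
ℚ-isomorphic integral Weierstrass models. -/
theorem stmt_6 (a b : ℤ) (hab : IsCoprime a b) (ha : 0 < a)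
    (hΔ : (a * b) ^ 5 * (-a ^ 2 - 11 * a * b + b ^ 2) ≠ 0) :
    let E : WeierstrassCurve ℚ :=
      { a₁ := ((a - b : ℤ) : ℚ)
        a₂ := ((-(a * b) : ℤ) : ℚ)
        a₃ := ((-(a ^ 2 * b) : ℤ) : ℚ)
        a₄ := 0
        a₆ := 0 }
    E.Δ = (((a * b) ^ 5 * (-a ^ 2 - 11 * a * b + b ^ 2) : ℤ) : ℚ) ∧
    ∀ C : WeierstrassCurve.VariableChange ℚ,
      ((∃ n : ℤ, (n : ℚ) = (C • E).a₁) ∧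
       (∃ n : ℤ, (n : ℚ) = (C • E).a₂) ∧
       (∃ n : ℤ, (n : ℚ) = (C • E).a₃) ∧
       (∃ n : ℤ, (n : ℚ) = (C • E).a₄) ∧
       (∃ n : ℤ, (n : ℚ) = (C • E).a₆)) →
      ∀ p : ℕ, p.Prime →
        padicValRat p E.Δ ≤ padicValRat p (C • E).Δ := by
  intro E
  set Δint : ℤ := (a * b) ^ 5 * (-a ^ 2 - 11 * a * b + b ^ 2) with hΔint
  set C4int : ℤ := a^4 + 12*a^3*b + 14*a^2*b^2 - 12*a*b^3 + b^4 with hC4int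
  have ha0 : a ≠ 0 := ha.ne'
  have hb0 : b ≠ 0 := by
    rintro rfl
    exact hΔ (by rw [hΔint]; ring)
  have hΔQ : E.Δ = ((Δint : ℤ) : ℚ) := by
    show WeierstrassCurve.Δ _ = _
    simp only [E, WeierstrassCurve.Δ, WeierstrassCurve.b₂, WeierstrassCurve.b₄,
      WeierstrassCurve.b₆, WeierstrassCurve.b₈, hΔint]
    push_cast
    ring
  have hC4Q : E.c₄ = ((C4int : ℤ) : ℚ) := by
    show WeierstrassCurve.c₄ _ = _
    simp only [E, WeierstrassCurve.c₄, WeierstrassCurve.b₂, WeierstrassCurve.b₄, hC4int]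
    push_cast
    ring
  have hΔQ0 : E.Δ ≠ 0 := by rw [hΔQ]; exact_mod_cast hΔ
  refine ⟨hΔQ, ?_⟩
  rintro C ⟨⟨m1, h1⟩, ⟨m2, h2⟩, ⟨m3, h3⟩, ⟨m4, h4⟩, ⟨m6, h6⟩⟩ p hp
  haveI : Fact p.Prime := ⟨hp⟩
  have hpZ : Prime (p : ℤ) := Nat.prime_iff_prime_int.mp hp
  set u : ℚ := (C.u : ℚ) with hudef
  have hu0 : u ≠ 0 := C.u.ne_zero
  set v : ℤ := padicValRat p u with hv
  -- Δ' in terms of Δ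
  have hΔ'eq : (C • E).Δ = u⁻¹ ^ 12 * E.Δ := by
    rw [WeierstrassCurve.variableChange_Δ, Units.val_inv_eq_inv_val]
  have hΔ'0 : (C • E).Δ ≠ 0 := by
    rw [hΔ'eq]
    exact mul_ne_zero (pow_ne_zero _ (inv_ne_zero hu0)) hΔQ0
  have hvΔ' : padicValRat p (C • E).Δ = padicValRat p E.Δ - 12 * v := by
    rw [hΔ'eq, padicValRat.mul (pow_ne_zero _ (inv_ne_zero hu0)) hΔQ0,
      padicValRat.pow _, padicValRat.inv]
    push_cast
    ring
  rw [hvΔ']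
  -- suffices to prove v ≤ 0
  suffices hvle : v ≤ 0 by linarith
  by_contra hvpos
  push_neg at hvpos
  have hv1 : 1 ≤ v := hvpos
  -- Δ' is an integer
  set Dm : ℤ := -(m1^2 + 4*m2)^2 * (m1^2*m6 + 4*m2*m6 - m1*m3*m4 + m2*m3^2 - m4^2)
      - 8*(2*m4 + m1*m3)^3 - 27*(m3^2 + 4*m6)^2
      + 9*(m1^2 + 4*m2)*(2*m4 + m1*m3)*(m3^2 + 4*m6) with hDm
  have hΔ'int : (C • E).Δ = ((Dm : ℤ) : ℚ) := by
    simp only [WeierstrassCurve.Δ, WeierstrassCurve.b₂, WeierstrassCurve.b₄,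
      WeierstrassCurve.b₆, WeierstrassCurve.b₈, ← h1, ← h2, ← h3, ← h4, ← h6, hDm]
    push_cast
    ring
  have hvΔ'nonneg : 0 ≤ padicValRat p (C • E).Δ := by
    rw [hΔ'int, padicValRat.of_int]
    exact_mod_cast Nat.cast_nonneg _
  -- hence padicValInt p Δint ≥ 12
  have hvΔval : padicValRat p E.Δ = (padicValInt p Δint : ℤ) := by
    rw [hΔQ, padicValRat.of_int]
  have h12 : (12 : ℤ) ≤ (padicValInt p Δint : ℤ) := by
    rw [hvΔ', hvΔval] at hvΔ'nonneg
    nlinarith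
  have hp12 : (p : ℤ) ^ 12 ∣ Δint := by
    rw [padicValInt_dvd_iff]
    exact Or.inr (by exact_mod_cast h12)
  -- p divides C4int
  have hpC4 : (p : ℤ) ∣ C4int := by
    by_cases hc0 : C4int = 0
    · rw [hc0]; exact dvd_zero _
    · have hC4Q0 : E.c₄ ≠ 0 := by rw [hC4Q]; exact_mod_cast hc0
      have hc4'eq : (C • E).c₄ = u⁻¹ ^ 4 * E.c₄ := by
        rw [WeierstrassCurve.variableChange_c₄, Units.val_inv_eq_inv_val]
      set Cm : ℤ := (m1^2 + 4*m2)^2 - 24*(2*m4 + m1*m3) with hCm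
      have hc4'int : (C • E).c₄ = ((Cm : ℤ) : ℚ) := by
        simp only [WeierstrassCurve.c₄, WeierstrassCurve.b₂, WeierstrassCurve.b₄,
          ← h1, ← h2, ← h3, ← h4, hCm]
        push_cast
        ring
      have hnn : 0 ≤ padicValRat p (C • E).c₄ := by
        rw [hc4'int, padicValRat.of_int]
        exact_mod_cast Nat.cast_nonneg _
      have hvc4 : padicValRat p (C • E).c₄
          = (padicValInt p C4int : ℤ) - 4 * v := by
        rw [hc4'eq, padicValRat.mul (pow_ne_zero _ (inv_ne_zero hu0)) hC4Q0,
          padicValRat.pow _, padicValRat.inv, hC4Q, padicValRat.of_int]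
        push_cast
        ring
      have h4le : (1 : ℤ) ≤ (padicValInt p C4int : ℤ) := by
        rw [hvc4] at hnn
        nlinarith
      have : (p : ℤ) ^ 1 ∣ C4int := by
        rw [padicValInt_dvd_iff]
        exact Or.inr (by exact_mod_cast h4le)
      simpa using this
  -- now the arithmetic contradiction
  by_cases hdab : (p : ℤ) ∣ a * b
  · -- p divides a or b; then p ∤ C4int
    rcases hpZ.dvd_mul.mp hdab with hpa | hpb
    · have hpb : (p : ℤ) ∣ b := by
        have : (p : ℤ) ∣ b^4 := by
          obtain ⟨k, hk⟩ := hpC4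
          obtain ⟨l, hl⟩ := hpa
          exact ⟨k - l*(a^3 + 12*a^2*b + 14*a*b^2 - 12*b^3), by linear_combination hk -
            (a^3 + 12*a^2*b + 14*a*b^2 - 12*b^3) * hl⟩
        exact hpZ.dvd_of_dvd_pow this
      exact hpZ.not_unit (hab.isUnit_of_dvd' hpa hpb)
    · have hpa : (p : ℤ) ∣ a := by
        have : (p : ℤ) ∣ a^4 := by
          obtain ⟨k, hk⟩ := hpC4
          obtain ⟨l, hl⟩ := hpb
          exact ⟨k - l*(12*a^3 + 14*a^2*b - 12*a*b^2 + b^3), by linear_combination hk -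
            (12*a^3 + 14*a^2*b - 12*a*b^2 + b^3) * hl⟩
        exact hpZ.dvd_of_dvd_pow this
      exact hpZ.not_unit (hab.isUnit_of_dvd' hpa hpb)
  · -- p ∤ ab, so p^12 ∣ δ
    have hcop : IsCoprime ((p : ℤ) ^ 12) ((a*b) ^ 5) :=
      ((hpZ.coprime_iff_not_dvd.mpr hdab).pow : _)
    have hpδ : (p : ℤ) ^ 12 ∣ (-a ^ 2 - 11 * a * b + b ^ 2) := by
      refine hcop.dvd_of_dvd_mul_left ?_
      rw [hΔint] at hp12
      exact hp12
    by_cases hp5 : p = 5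
    · subst hp5
      have h5a : ¬(5:ℤ) ∣ a := fun h => hdab (by exact_mod_cast h.mul_right b)
      have h5b : ¬(5:ℤ) ∣ b := fun h => hdab (by exact_mod_cast h.mul_left a)
      have h54 : (5:ℤ)^4 ∣ (-a ^ 2 - 11 * a * b + b ^ 2) :=
        dvd_trans (pow_dvd_pow (5:ℤ) (by norm_num : 4 ≤ 12)) (by exact_mod_cast hpδ)
      exact aux_five a b h5a h5b h54
    · -- p ∣ 5a²b² since C4 = 5a²b² + (b²-ab-a²)δ
      have hdvd5 : (p : ℤ) ∣ 5 * (a*b)^2 := by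
        obtain ⟨k, hk⟩ := hpC4
        obtain ⟨l, hl⟩ := (dvd_trans (dvd_pow_self (p:ℤ) (by norm_num : (12:ℕ) ≠ 0)) hpδ)
        exact ⟨k - (b^2 - a*b - a^2)*l, by linear_combination hk - (b^2 - a*b - a^2) * hl⟩
      rcases hpZ.dvd_mul.mp hdvd5 with h5 | hab2
      · have : p ∣ 5 := by exact_mod_cast h5
        exact hp5 ((Nat.prime_dvd_prime_iff_eq hp (by norm_num)).mp this)
      · exact hdab (hpZ.dvd_of_dvd_pow hab2)
end

section
/- Let E be an elliptic curve over ℚ with a rational point of order 7, given by the model y² + (a²+ab−b²)xy + (a⁴b² − a³b³)y = x³ + (a²b² − ab³)x² for coprime integers a, b. If E has additive reduction at a prime p, then p = 7. -/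
/-- Let `E` be the (globally minimal) model `E_{C₇}(a,b)` of an elliptic curve over ℚ with a
rational point of order 7, for coprime integers `a, b`. If `E` has additive reduction at a
prime `p` (i.e. `p` divides both its minimal discriminant `γ` and the `c₄`-invariant `α`),
then `p = 7`. -/
theorem stmt_7 (a b : ℤ) (hab : IsCoprime a b) (p : ℕ) (hp : p.Prime)
    (hα : (p : ℤ) ∣ (a ^ 2 - a * b + b ^ 2) *
      (a ^ 6 + 5 * a ^ 5 * b - 10 * a ^ 4 * b ^ 2 - 15 * a ^ 3 * b ^ 3 + 30 * a ^ 2 * b ^ 4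
        - 11 * a * b ^ 5 + b ^ 6))
    (hγ : (p : ℤ) ∣ (a * b) ^ 7 * (b - a) ^ 7 *
      (a ^ 3 + 5 * a ^ 2 * b - 8 * a * b ^ 2 + b ^ 3)) :
    p = 7 := by
  have hp' : Prime (p : ℤ) := Nat.prime_iff_prime_int.mp hp
  obtain ⟨u, v, huv⟩ := hab
  have hnotboth : ¬ ((p : ℤ) ∣ a ∧ (p : ℤ) ∣ b) := by
    rintro ⟨ha, hb⟩
    exact hp'.not_unit (isUnit_of_dvd_one (huv ▸ dvd_add ((ha.mul_left u)) ((hb.mul_left v))))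
  have hna : ¬ (p : ℤ) ∣ a := by
    intro ha
    refine hnotboth ⟨ha, hp'.dvd_of_dvd_pow (n := 8) ?_⟩
    have h := dvd_sub hα (ha.mul_right
      (a ^ 7 + 4 * a ^ 6 * b - 14 * a ^ 5 * b ^ 2 + 35 * a ^ 3 * b ^ 4 - 56 * a ^ 2 * b ^ 5
        + 42 * a * b ^ 6 - 12 * b ^ 7))
    convert h using 1
    ring
  have hnb : ¬ (p : ℤ) ∣ b := by
    intro hb
    refine hnotboth ⟨hp'.dvd_of_dvd_pow (n := 8) ?_, hb⟩
    have h := dvd_sub hα (hb.mul_right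
      (4 * a ^ 7 - 14 * a ^ 6 * b + 35 * a ^ 4 * b ^ 3 - 56 * a ^ 3 * b ^ 4 + 42 * a ^ 2 * b ^ 5
        - 12 * a * b ^ 6 + b ^ 7))
    convert h using 1
    ring
  -- p divides a*b, b-a, or the cubic c
  rcases hp'.dvd_mul.mp hγ with h1 | hc
  · rcases hp'.dvd_mul.mp h1 with h2 | h3
    · rcases hp'.dvd_mul.mp ((Prime.dvd_pow_iff_dvd hp' (by norm_num)).mp h2 :
        (p : ℤ) ∣ a * b) with ha | hb
      · exact absurd ha hna
      · exact absurd hb hnb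
    · -- p ∣ b - a, then p ∣ a^8 from α
      exfalso
      have hd : (p : ℤ) ∣ b - a := (Prime.dvd_pow_iff_dvd hp' (by norm_num)).mp h3
      apply hna
      refine hp'.dvd_of_dvd_pow (n := 8) ?_
      have h := dvd_sub hα (hd.mul_right
        (-4 * a ^ 6 * b + 10 * a ^ 5 * b ^ 2 + 10 * a ^ 4 * b ^ 3 - 25 * a ^ 3 * b ^ 4
          + 31 * a ^ 2 * b ^ 5 - 11 * a * b ^ 6 + b ^ 7))
      convert h using 1
      ring
  · -- p divides the cubic; split α into its two factors
    rcases hp'.dvd_mul.mp hα with hq | hs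
    · -- p ∣ q and p ∣ c ⇒ p ∣ 49 b^4 ⇒ p ∣ 49 ⇒ p = 7
      have h49 : (p : ℤ) ∣ 49 * b ^ 4 := by
        have h := dvd_add (hq.mul_left (-3 * a ^ 2 - 10 * a * b + 57 * b ^ 2))
          (hc.mul_left (3 * a - 8 * b))
        refine h.trans (dvd_of_eq ?_)
        ring
      have h7 : (p : ℤ) ∣ 49 := by
        rcases hp'.dvd_mul.mp h49 with h | h
        · exact h
        · exact absurd (hp'.dvd_of_dvd_pow h) hnb
      have : (p : ℤ) ∣ 7 := by
        have : (p : ℤ) ∣ 7 ^ 2 := by norm_num at h7 ⊢; exact_mod_cast h7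
        exact hp'.dvd_of_dvd_pow this
      have hp7 : p ∣ 7 := by exact_mod_cast this
      exact (Nat.prime_dvd_prime_iff_eq hp (by norm_num)).mp hp7
    · -- p ∣ s and p ∣ c ⇒ p ∣ b^8, contradiction
      exfalso
      apply hnb
      refine hp'.dvd_of_dvd_pow (n := 8) ?_
      have h := dvd_add (hs.mul_left (76 * b ^ 2 - 32 * a * b - 7 * a ^ 2))
        (hc.mul_left (-75 * b ^ 5 + 268 * a * b ^ 4 - 106 * a ^ 2 * b ^ 3 - 90 * a ^ 3 * b ^ 2
          + 32 * a ^ 4 * b + 7 * a ^ 5))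
      convert h using 1
      ring
end

section
/- Let a, b be coprime integers and consider the elliptic curve E_{C₇}(a,b): y² + (a²+ab−b²)xy + (a⁴b² − a³b³)y = x³ + (a²b² − ab³)x². Then E has additive reduction at 7 if and only if 7 divides a + 4b. -/
lemma zmod7_key : ∀ A B : ZMod 7, ¬(A = 0 ∧ B = 0) →
    ((((A ^ 2 - A * B + B ^ 2) *
        (A ^ 6 + 5 * A ^ 5 * B - 10 * A ^ 4 * B ^ 2 - 15 * A ^ 3 * B ^ 3 + 30 * A ^ 2 * B ^ 4
          - 11 * A * B ^ 5 + B ^ 6) = 0) ∧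
      ((A * B) ^ 7 * (B - A) ^ 7 *
        (A ^ 3 + 5 * A ^ 2 * B - 8 * A * B ^ 2 + B ^ 3) = 0)) ↔
    A + 4 * B = 0) := by decide

/-- For coprime integers `a, b`, the curve `E_{C₇}(a,b)` has additive reduction at `7`
(i.e. `7` divides both its `c₄`-invariant `α` and its minimal discriminant `γ`)
if and only if `7 ∣ a + 4b`. -/
theorem stmt_8 (a b : ℤ) (hab : IsCoprime a b) :
    (((7 : ℤ) ∣ (a ^ 2 - a * b + b ^ 2) *
        (a ^ 6 + 5 * a ^ 5 * b - 10 * a ^ 4 * b ^ 2 - 15 * a ^ 3 * b ^ 3 + 30 * a ^ 2 * b ^ 4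
          - 11 * a * b ^ 5 + b ^ 6)) ∧
      ((7 : ℤ) ∣ (a * b) ^ 7 * (b - a) ^ 7 *
        (a ^ 3 + 5 * a ^ 2 * b - 8 * a * b ^ 2 + b ^ 3))) ↔
    (7 : ℤ) ∣ (a + 4 * b) := by
  have hnb : ¬((a : ZMod 7) = 0 ∧ (b : ZMod 7) = 0) := by
    rintro ⟨ha, hb⟩
    rw [ZMod.intCast_zmod_eq_zero_iff_dvd] at ha hb
    have := hab.isUnit_of_dvd' ha hb
    rw [Int.isUnit_iff] at this; norm_num at this
  have key := zmod7_key (a : ZMod 7) (b : ZMod 7) hnb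
  rw [show ((7:ℤ)) = ((7:ℕ):ℤ) by norm_num]
  simp only [← ZMod.intCast_zmod_eq_zero_iff_dvd]
  push_cast
  exact key
end

section
/- Let a, b be coprime integers. Then α ≡ (a+b)¹² (mod 3) and γ ≡ 2a⁹b⁹(a²−b²)⁹ (mod 3), where α = (a³ − 3ab² + b³)(a⁹ − 9a⁷b² + 27a⁶b³ − 45a⁵b⁴ + 54a⁴b⁵ − 48a³b⁶ + 27a²b⁷ − 9ab⁸ + b⁹) and γ = (ab)⁹(b−a)⁹(a² − ab + b²)³(a³ + 3a²b − 6ab² + b³). Consequently, 3 divides both α and γ if and only if 3 divides a + b. -/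
lemma key310 : ∀ x y : ZMod 3,
    ((x ^ 3 - 3 * x * y ^ 2 + y ^ 3) *
      (x ^ 9 - 9 * x ^ 7 * y ^ 2 + 27 * x ^ 6 * y ^ 3 - 45 * x ^ 5 * y ^ 4 + 54 * x ^ 4 * y ^ 5
        - 48 * x ^ 3 * y ^ 6 + 27 * x ^ 2 * y ^ 7 - 9 * x * y ^ 8 + y ^ 9) = (x + y) ^ 12) ∧
    ((x * y) ^ 9 * (y - x) ^ 9 * (x ^ 2 - x * y + y ^ 2) ^ 3 *
      (x ^ 3 + 3 * x ^ 2 * y - 6 * x * y ^ 2 + y ^ 3)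
      = 2 * x ^ 9 * y ^ 9 * (x ^ 2 - y ^ 2) ^ 9) ∧
    ((x + y) ^ 12 = 0 ↔ x + y = 0) := by
  decide

/-- For coprime integers `a, b`: `α ≡ (a+b)¹² (mod 3)` and `γ ≡ 2a⁹b⁹(a²−b²)⁹ (mod 3)`, where
`α` and `γ` are the `c₄`-invariant and discriminant of `E_{C₉}(a,b)`. Consequently `3` divides
both `α` and `γ` if and only if `3 ∣ a + b`. -/
theorem stmt_10 (a b : ℤ) (hab : IsCoprime a b) :
    let α := (a ^ 3 - 3 * a * b ^ 2 + b ^ 3) *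
      (a ^ 9 - 9 * a ^ 7 * b ^ 2 + 27 * a ^ 6 * b ^ 3 - 45 * a ^ 5 * b ^ 4 + 54 * a ^ 4 * b ^ 5
        - 48 * a ^ 3 * b ^ 6 + 27 * a ^ 2 * b ^ 7 - 9 * a * b ^ 8 + b ^ 9)
    let γ := (a * b) ^ 9 * (b - a) ^ 9 * (a ^ 2 - a * b + b ^ 2) ^ 3 *
      (a ^ 3 + 3 * a ^ 2 * b - 6 * a * b ^ 2 + b ^ 3)
    (α ≡ (a + b) ^ 12 [ZMOD 3]) ∧
    (γ ≡ 2 * a ^ 9 * b ^ 9 * (a ^ 2 - b ^ 2) ^ 9 [ZMOD 3]) ∧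
    (((3 : ℤ) ∣ α ∧ (3 : ℤ) ∣ γ) ↔ (3 : ℤ) ∣ (a + b)) := by
  intro α γ
  obtain ⟨h1, h2, h3⟩ := key310 (a : ZMod 3) (b : ZMod 3)
  have e1 : ((α : ℤ) : ZMod 3) = (((a + b) ^ 12 : ℤ) : ZMod 3) := by
    show ((((a ^ 3 - 3 * a * b ^ 2 + b ^ 3) *
      (a ^ 9 - 9 * a ^ 7 * b ^ 2 + 27 * a ^ 6 * b ^ 3 - 45 * a ^ 5 * b ^ 4 + 54 * a ^ 4 * b ^ 5
        - 48 * a ^ 3 * b ^ 6 + 27 * a ^ 2 * b ^ 7 - 9 * a * b ^ 8 + b ^ 9) : ℤ)) : ZMod 3) = _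
    push_cast
    exact h1
  have e2 : ((γ : ℤ) : ZMod 3) = ((2 * a ^ 9 * b ^ 9 * (a ^ 2 - b ^ 2) ^ 9 : ℤ) : ZMod 3) := by
    show ((((a * b) ^ 9 * (b - a) ^ 9 * (a ^ 2 - a * b + b ^ 2) ^ 3 *
      (a ^ 3 + 3 * a ^ 2 * b - 6 * a * b ^ 2 + b ^ 3) : ℤ)) : ZMod 3) = _
    push_cast
    exact h2
  refine ⟨(ZMod.intCast_eq_intCast_iff _ _ _).mp e1,
    (ZMod.intCast_eq_intCast_iff _ _ _).mp e2, ?_⟩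
  have d1 : (3 : ℤ) ∣ α ↔ ((α : ℤ) : ZMod 3) = 0 :=
    (ZMod.intCast_zmod_eq_zero_iff_dvd α 3).symm
  have d2 : (3 : ℤ) ∣ γ ↔ ((γ : ℤ) : ZMod 3) = 0 :=
    (ZMod.intCast_zmod_eq_zero_iff_dvd γ 3).symm
  have dab : (3 : ℤ) ∣ (a + b) ↔ ((a : ZMod 3) + (b : ZMod 3)) = 0 := by
    have := (ZMod.intCast_zmod_eq_zero_iff_dvd (a + b) 3)
    push_cast at this
    rw [← this]
  rw [d1, d2, dab, e1, e2]
  push_cast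
  constructor
  · rintro ⟨hA, -⟩
    exact h3.mp hA
  · intro h
    constructor
    · exact h3.mpr h
    · have : (b : ZMod 3) = -(a : ZMod 3) := by linear_combination h
      rw [this]; ring
end

section
/- Let a, b be coprime integers and set α = a¹⁶ + 32a¹⁵b + 448a¹⁴b² + 3584a¹³b³ + 17664a¹²b⁴ + 51200a¹¹b⁵ + 51200a¹⁰b⁶ − 237568a⁹b⁷ − 1183744a⁸b⁸ − 1900544a⁷b⁹ + 3276800a⁶b¹⁰ + 26214400a⁵b¹¹ + 72351744a⁴b¹² + 117440512a³b¹³ + 117440512a²b¹⁴ + 67108864ab¹⁵ + 16777216b¹⁶ (the c₄-invariant of the family E_{C₂×C₈}(a,b)). Then v₂(α) = 0 if a is odd, v₂(α) = 16 if v₂(a) = 1, and v₂(α) = 24 if v₂(a) ≥ 2. -/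
/-- For coprime integers `a, b` and the `c₄`-invariant `α` of `E_{C₂×C₈}(a,b)`:
`v₂(α) = 0` if `a` is odd, `v₂(α) = 16` if `v₂(a) = 1`, and `v₂(α) = 24` if `v₂(a) ≥ 2`. -/
theorem stmt_11 (a b : ℤ) (hab : IsCoprime a b) :
    let α := a ^ 16 + 32 * a ^ 15 * b + 448 * a ^ 14 * b ^ 2 + 3584 * a ^ 13 * b ^ 3
      + 17664 * a ^ 12 * b ^ 4 + 51200 * a ^ 11 * b ^ 5 + 51200 * a ^ 10 * b ^ 6
      - 237568 * a ^ 9 * b ^ 7 - 1183744 * a ^ 8 * b ^ 8 - 1900544 * a ^ 7 * b ^ 9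
      + 3276800 * a ^ 6 * b ^ 10 + 26214400 * a ^ 5 * b ^ 11 + 72351744 * a ^ 4 * b ^ 12
      + 117440512 * a ^ 3 * b ^ 13 + 117440512 * a ^ 2 * b ^ 14 + 67108864 * a * b ^ 15
      + 16777216 * b ^ 16
    (¬ (2 : ℤ) ∣ a → emultiplicity (2 : ℤ) α = 0) ∧
    (((2 : ℤ) ∣ a ∧ ¬ (4 : ℤ) ∣ a) → emultiplicity (2 : ℤ) α = 16) ∧
    ((4 : ℤ) ∣ a → emultiplicity (2 : ℤ) α = 24) := by
  intro α
  have hp : Prime (2 : ℤ) := Int.prime_two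
  refine ⟨?_, ?_, ?_⟩
  · -- a odd
    intro ha
    rw [emultiplicity_eq_zero]
    intro h
    apply ha
    apply hp.dvd_of_dvd_pow (n := 16)
    have : α - 2 * (16 * a ^ 15 * b + 224 * a ^ 14 * b ^ 2 + 1792 * a ^ 13 * b ^ 3
      + 8832 * a ^ 12 * b ^ 4 + 25600 * a ^ 11 * b ^ 5 + 25600 * a ^ 10 * b ^ 6
      - 118784 * a ^ 9 * b ^ 7 - 591872 * a ^ 8 * b ^ 8 - 950272 * a ^ 7 * b ^ 9
      + 1638400 * a ^ 6 * b ^ 10 + 13107200 * a ^ 5 * b ^ 11 + 36175872 * a ^ 4 * b ^ 12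
      + 58720256 * a ^ 3 * b ^ 13 + 58720256 * a ^ 2 * b ^ 14 + 33554432 * a * b ^ 15
      + 8388608 * b ^ 16) = a ^ 16 := by simp only [α]; ring
    rw [← this]
    exact dvd_sub h (Dvd.intro _ rfl)
  · -- v₂(a) = 1
    rintro ⟨⟨c, rfl⟩, h4⟩
    have hc : ¬ (2 : ℤ) ∣ c := fun ⟨d, hd⟩ => h4 ⟨d, by rw [hd]; ring⟩
    have hb : ¬ (2 : ℤ) ∣ b := fun h2 => by
      have := hab.isUnit_of_dvd' ⟨c, rfl⟩ h2
      rw [Int.isUnit_iff] at this; omega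
    set W : ℤ := c ^ 16 + 2 * (8 * c ^ 15 * b + 56 * c ^ 14 * b ^ 2 + 224 * c ^ 13 * b ^ 3
      + 552 * c ^ 12 * b ^ 4 + 800 * c ^ 11 * b ^ 5 + 400 * c ^ 10 * b ^ 6
      - 928 * c ^ 9 * b ^ 7 - 2312 * c ^ 8 * b ^ 8 - 1856 * c ^ 7 * b ^ 9
      + 1600 * c ^ 6 * b ^ 10 + 6400 * c ^ 5 * b ^ 11 + 8832 * c ^ 4 * b ^ 12
      + 7168 * c ^ 3 * b ^ 13 + 3584 * c ^ 2 * b ^ 14 + 1024 * c * b ^ 15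
      + 128 * b ^ 16) with hW
    have hαW : α = 2 ^ 16 * W := by simp only [α, hW]; ring
    have : ((16 : ℕ) : ℕ∞) = (16 : ℕ∞) := rfl
    rw [show ((16 : ℕ∞)) = ((16 : ℕ) : ℕ∞) from rfl, emultiplicity_eq_coe]
    constructor
    · exact ⟨W, hαW⟩
    · rintro ⟨d, hd⟩
      apply hc
      apply hp.dvd_of_dvd_pow (n := 16)
      have h2W : (2 : ℤ) ∣ W := by
        have : (2:ℤ) ^ 16 * W = 2 ^ 16 * (2 * d) := by rw [← hαW, hd]; ring
        have := mul_left_cancel₀ (by norm_num : ((2:ℤ)^16) ≠ 0) this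
        exact this ▸ ⟨d, rfl⟩
      rw [hW] at h2W
      exact (dvd_add_left (Dvd.intro _ rfl)).mp h2W
  · -- v₂(a) ≥ 2
    rintro ⟨c, rfl⟩
    have hb : ¬ (2 : ℤ) ∣ b := fun h2 => by
      have := hab.isUnit_of_dvd' ⟨2 * c, by ring⟩ h2
      rw [Int.isUnit_iff] at this; omega
    set W : ℤ := b ^ 16 + 2 * (128 * c ^ 16 + 1024 * c ^ 15 * b + 3584 * c ^ 14 * b ^ 2
      + 7168 * c ^ 13 * b ^ 3 + 8832 * c ^ 12 * b ^ 4 + 6400 * c ^ 11 * b ^ 5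
      + 1600 * c ^ 10 * b ^ 6 - 1856 * c ^ 9 * b ^ 7 - 2312 * c ^ 8 * b ^ 8
      - 928 * c ^ 7 * b ^ 9 + 400 * c ^ 6 * b ^ 10 + 800 * c ^ 5 * b ^ 11
      + 552 * c ^ 4 * b ^ 12 + 224 * c ^ 3 * b ^ 13 + 56 * c ^ 2 * b ^ 14
      + 8 * c * b ^ 15) with hW
    have hαW : α = 2 ^ 24 * W := by simp only [α, hW]; ring
    rw [show ((24 : ℕ∞)) = ((24 : ℕ) : ℕ∞) from rfl, emultiplicity_eq_coe]
    constructor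
    · exact ⟨W, hαW⟩
    · rintro ⟨d, hd⟩
      apply hb
      apply hp.dvd_of_dvd_pow (n := 16)
      have h2W : (2 : ℤ) ∣ W := by
        have : (2:ℤ) ^ 24 * W = 2 ^ 24 * (2 * d) := by rw [← hαW, hd]; ring
        have := mul_left_cancel₀ (by norm_num : ((2:ℤ)^24) ≠ 0) this
        exact this ▸ ⟨d, rfl⟩
      rw [hW] at h2W
      exact (dvd_add_left (Dvd.intro _ rfl)).mp h2W
end

section
/- Let a, b, d be integers with gcd(a,b) = 1, d squarefree, and a even. Consider c₄ = 16d²(a² − ab + b²) and Δ = 16a²b²d⁶(a−b)². If an odd prime p satisfies p⁴ ∣ c₄ and p¹² ∣ Δ, a contradiction follows; that is, no odd prime p satisfies both p⁴ ∣ 16d²(a² − ab + b²) and p¹² ∣ 16a²b²d⁶(a−b)². -/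
/-- Let `a, b, d` be integers with `gcd(a,b) = 1`, `d` squarefree and `a` even. Then no odd
prime `p` satisfies both `p⁴ ∣ 16d²(a² − ab + b²)` and `p¹² ∣ 16a²b²d⁶(a−b)²`. -/
theorem stmt_12 (a b d : ℤ) (hab : IsCoprime a b) (hd : Squarefree d) (ha : Even a)
    (p : ℕ) (hp : p.Prime) (hp2 : p ≠ 2) :
    ¬ (((p : ℤ) ^ 4 ∣ 16 * d ^ 2 * (a ^ 2 - a * b + b ^ 2)) ∧
       ((p : ℤ) ^ 12 ∣ 16 * a ^ 2 * b ^ 2 * d ^ 6 * (a - b) ^ 2)) := by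
  rintro ⟨h4, h12⟩
  have hP : Prime (p : ℤ) := Nat.prime_iff_prime_int.mp hp
  have hP16 : ¬ (p : ℤ) ∣ 16 := by
    intro h
    have h2' : (p : ℤ) ∣ 2 := hP.dvd_of_dvd_pow (show (p : ℤ) ∣ 2 ^ 4 by norm_num; exact h)
    have : p ∣ 2 := by exact_mod_cast h2'
    exact hp2 ((Nat.prime_dvd_prime_iff_eq hp Nat.prime_two).mp this)
  have hpd2 : ¬ (p : ℤ) ^ 2 ∣ d := by
    intro h
    exact hP.not_unit (hd (p : ℤ) (by rwa [← sq]))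
  -- p divides a² - ab + b²
  have hN : (p : ℤ) ∣ a ^ 2 - a * b + b ^ 2 := by
    by_contra hNn
    have h1 : (p : ℤ) ^ 4 ∣ 16 * (d ^ 2 * (a ^ 2 - a * b + b ^ 2)) := by
      rwa [← mul_assoc]
    have h2 := hP.pow_dvd_of_dvd_mul_left 4 hP16 h1
    have h3 := hP.pow_dvd_of_dvd_mul_right 4 hNn h2
    have h5 : ((p : ℤ) ^ 2) ^ 2 ∣ d ^ 2 := by rwa [← pow_mul]
    exact hpd2 ((Int.pow_dvd_pow_iff two_ne_zero).mp h5)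
  -- p divides a*b*(a-b)
  have hABD : (p : ℤ) ∣ a * b * (a - b) := by
    by_contra hX
    have heq : (16 : ℤ) * a ^ 2 * b ^ 2 * d ^ 6 * (a - b) ^ 2
        = 16 * ((a * b * (a - b)) ^ 2 * d ^ 6) := by ring
    rw [heq] at h12
    have h2 := hP.pow_dvd_of_dvd_mul_left 12 hP16 h12
    have hX2 : ¬ (p : ℤ) ∣ (a * b * (a - b)) ^ 2 := fun h => hX (hP.dvd_of_dvd_pow h)
    have h3 := hP.pow_dvd_of_dvd_mul_left 12 hX2 h2
    have h5 : ((p : ℤ) ^ 2) ^ 6 ∣ d ^ 6 := by rwa [← pow_mul]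
    exact hpd2 ((Int.pow_dvd_pow_iff (by norm_num : (6 : ℕ) ≠ 0)).mp h5)
  have notboth : ¬ ((p : ℤ) ∣ a ∧ (p : ℤ) ∣ b) := by
    rintro ⟨h1, h2⟩
    exact hP.not_unit (hab.isUnit_of_dvd' h1 h2)
  rcases hP.dvd_mul.mp hABD with hab' | hd'
  · rcases hP.dvd_mul.mp hab' with hA | hB
    · have hB : (p : ℤ) ∣ b ^ 2 := by
        have : b ^ 2 = (a ^ 2 - a * b + b ^ 2) - a * a + a * b := by ring
        rw [this]
        exact dvd_add (dvd_sub hN (hA.mul_right a)) (hA.mul_right b)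
      exact notboth ⟨hA, hP.dvd_of_dvd_pow hB⟩
    · have hA : (p : ℤ) ∣ a ^ 2 := by
        have : a ^ 2 = (a ^ 2 - a * b + b ^ 2) + b * a - b * b := by ring
        rw [this]
        exact dvd_sub (dvd_add hN (hB.mul_right a)) (hB.mul_right b)
      exact notboth ⟨hP.dvd_of_dvd_pow hA, hB⟩
  · have hab2 : (p : ℤ) ∣ a * b := by
      have : a * b = (a ^ 2 - a * b + b ^ 2) - (a - b) * (a - b) := by ring
      rw [this]
      exact dvd_sub hN (hd'.mul_right (a - b))
    rcases hP.dvd_mul.mp hab2 with hA | hB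
    · have hB : (p : ℤ) ∣ b := by
        have : b = a - (a - b) := by ring
        rw [this]; exact dvd_sub hA hd'
      exact notboth ⟨hA, hB⟩
    · have hA : (p : ℤ) ∣ a := by
        have : a = (a - b) + b := by ring
        rw [this]; exact dvd_add hd' hB
      exact notboth ⟨hA, hB⟩
end

section
/- Let a, b be odd integers with v₂(a + b) ≥ 2 (where v₂ is the 2-adic valuation). For the family E_{C₂×C₆}(a,b), set α = (21a² − 6ab + b²)(6861a⁶ − 2178a⁵b − 825a⁴b² + 180a³b³ + 75a²b⁴ − 18ab⁵ + b⁶). Then v₂(α) = 8. Moreover, if v₂(a+b) = 1 then v₂(α) = 16, and if a + b is odd then v₂(α) = 0. -/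
private lemma emu_aux (k : ℕ) (u x : ℤ) (hx : x = 2 ^ k * u)
    (hu : ((u : ZMod 2) = 1)) : emultiplicity (2 : ℤ) x = (k : ℕ∞) := by
  have hu' : ¬ (2 : ℤ) ∣ u := by
    intro hd
    have : ((u : ZMod 2)) = 0 := by
      have := (ZMod.intCast_zmod_eq_zero_iff_dvd u 2).2 (by exact_mod_cast hd)
      exact this
    rw [this] at hu
    exact zero_ne_one hu
  apply emultiplicity_eq_of_dvd_of_not_dvd
  · exact ⟨u, hx⟩
  · intro hdvd
    rw [hx, pow_succ] at hdvd
    exact hu' ((mul_dvd_mul_iff_left (pow_ne_zero k (two_ne_zero))).mp hdvd)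

/-- For the `c₄`-invariant `α` of the family `E_{C₂×C₆}(a,b)`: if `a, b` are odd with
`v₂(a+b) ≥ 2` then `v₂(α) = 8`; moreover if `v₂(a+b) = 1` then `v₂(α) = 16`, and if `a + b`
is odd then `v₂(α) = 0`. -/
theorem stmt_13 (a b : ℤ) :
    let α := (21 * a ^ 2 - 6 * a * b + b ^ 2) *
      (6861 * a ^ 6 - 2178 * a ^ 5 * b - 825 * a ^ 4 * b ^ 2 + 180 * a ^ 3 * b ^ 3
        + 75 * a ^ 2 * b ^ 4 - 18 * a * b ^ 5 + b ^ 6)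
    (Odd a → Odd b → (4 : ℤ) ∣ (a + b) → emultiplicity (2 : ℤ) α = 8) ∧
    (Odd a → Odd b → ((2 : ℤ) ∣ (a + b) ∧ ¬ (4 : ℤ) ∣ (a + b)) →
      emultiplicity (2 : ℤ) α = 16) ∧
    (Odd (a + b) → emultiplicity (2 : ℤ) α = 0) := by
  intro α
  refine ⟨?_, ?_, ?_⟩
  · rintro ⟨x, hxa⟩ _ ⟨k, hk⟩
    have hb : b = 4 * k - a := by linarith
    have h8 : (8 : ℕ∞) = ((8 : ℕ) : ℕ∞) := by rfl
    rw [h8]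
    apply emu_aux 8
      (227584 * x ^ 8 - 151552 * x ^ 7 * k + 910336 * x ^ 7 - 35840 * x ^ 6 * k ^ 2
        - 530432 * x ^ 6 * k + 1593088 * x ^ 6 - 28672 * x ^ 5 * k ^ 3
        - 107520 * x ^ 5 * k ^ 2 - 795648 * x ^ 5 * k + 1593088 * x ^ 5
        + 110080 * x ^ 4 * k ^ 4 - 71680 * x ^ 4 * k ^ 3 - 134400 * x ^ 4 * k ^ 2
        - 663040 * x ^ 4 * k + 995680 * x ^ 4 - 77824 * x ^ 3 * k ^ 5
        + 220160 * x ^ 3 * k ^ 4 - 71680 * x ^ 3 * k ^ 3 - 89600 * x ^ 3 * k ^ 2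
        - 331520 * x ^ 3 * k + 398272 * x ^ 3 + 25600 * x ^ 2 * k ^ 6
        - 116736 * x ^ 2 * k ^ 5 + 165120 * x ^ 2 * k ^ 4 - 35840 * x ^ 2 * k ^ 3
        - 33600 * x ^ 2 * k ^ 2 - 99456 * x ^ 2 * k + 99568 * x ^ 2 - 4096 * x * k ^ 7
        + 25600 * x * k ^ 6 - 58368 * x * k ^ 5 + 55040 * x * k ^ 4 - 8960 * x * k ^ 3
        - 6720 * x * k ^ 2 - 16576 * x * k + 14224 * x + 256 * k ^ 8 - 2048 * k ^ 7
        + 6400 * k ^ 6 - 9728 * k ^ 5 + 6880 * k ^ 4 - 896 * k ^ 3 - 560 * k ^ 2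
        - 1184 * k + 889)
    · show α = _
      simp only [α, hb, hxa]
      ring
    · push_cast
      generalize ((x : ZMod 2)) = X
      generalize ((k : ZMod 2)) = K
      revert X K
      decide
  · rintro ⟨x, hxa⟩ _ ⟨⟨m, hm⟩, h4⟩
    obtain ⟨y, hy⟩ : Odd m := by
      rcases Int.even_or_odd m with ⟨t, ht⟩ | h
      · exact absurd ⟨t, by linarith⟩ h4
      · exact h
    have hb : b = 2 * (2 * y + 1) - a := by omega
    have h16 : (16 : ℕ∞) = ((16 : ℕ) : ℕ∞) := by rfl
    rw [h16]
    apply emu_aux 16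
      (889 * x ^ 8 - 592 * x ^ 7 * y + 3260 * x ^ 7 - 140 * x ^ 6 * y ^ 2
        - 2212 * x ^ 6 * y + 5152 * x ^ 6 - 112 * x ^ 5 * y ^ 3 - 588 * x ^ 5 * y ^ 2
        - 3612 * x ^ 5 * y + 4550 * x ^ 5 + 430 * x ^ 4 * y ^ 4 + 580 * x ^ 4 * y ^ 3
        - 300 * x ^ 4 * y ^ 2 - 3110 * x ^ 4 * y + 2455 * x ^ 4 - 304 * x ^ 3 * y ^ 5
        + 100 * x ^ 3 * y ^ 4 + 680 * x ^ 3 * y ^ 3 + 140 * x ^ 3 * y ^ 2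
        - 1520 * x ^ 3 * y + 830 * x ^ 3 + 100 * x ^ 2 * y ^ 6 - 156 * x ^ 2 * y ^ 5
        - 120 * x ^ 2 * y ^ 4 + 260 * x ^ 2 * y ^ 3 + 150 * x ^ 2 * y ^ 2
        - 426 * x ^ 2 * y + 172 * x ^ 2 - 16 * x * y ^ 7 + 44 * x * y ^ 6
        - 12 * x * y ^ 5 - 50 * x * y ^ 4 + 40 * x * y ^ 3 + 42 * x * y ^ 2
        - 64 * x * y + 20 * x + 1 * y ^ 8 - 4 * y ^ 7 + 4 * y ^ 6 + 2 * y ^ 5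
        - 5 * y ^ 4 + 2 * y ^ 3 + 4 * y ^ 2 - 4 * y + 1)
    · show α = _
      simp only [α, hb, hxa]
      ring
    · push_cast
      generalize ((x : ZMod 2)) = X
      generalize ((y : ZMod 2)) = Y
      revert X Y
      decide
  · rintro ⟨c, hc⟩
    have hb : b = 2 * c + 1 - a := by linarith
    have h0 : (0 : ℕ∞) = ((0 : ℕ) : ℕ∞) := by rfl
    rw [h0]
    apply emu_aux 0 α
    · rw [pow_zero, one_mul]
    · show ((α : ℤ) : ZMod 2) = 1
      simp only [α, hb]
      push_cast
      generalize ((a : ZMod 2)) = A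
      generalize ((c : ZMod 2)) = C
      revert A C
      decide
end

section
/- Let a and b be coprime odd integers with v₂(a+b) ≥ 3. Then the Weierstrass equation y² + ((a−b)/2)xy − (ab(a+b)/8)y = x³ − (b(a+b)/4)x² has integer coefficients, and its discriminant equals 2⁻¹² · a²b⁶(a+9b)(a+b)³. -/
/-- Let `a, b` be coprime odd integers with `v₂(a+b) ≥ 3`. Then the Weierstrass equation
`y² + ((a−b)/2)xy − (ab(a+b)/8)y = x³ − (b(a+b)/4)x²` has integer coefficients, and its
discriminant equals `2⁻¹² · a²b⁶(a+9b)(a+b)³`. -/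
theorem stmt_17 (a b : ℤ) (hab : IsCoprime a b) (ha : Odd a) (hb : Odd b)
    (h8 : (8 : ℤ) ∣ (a + b)) :
    let W : WeierstrassCurve ℚ :=
      { a₁ := ((a - b : ℤ) : ℚ) / 2
        a₂ := -(((b * (a + b) : ℤ) : ℚ) / 4)
        a₃ := -(((a * b * (a + b) : ℤ) : ℚ) / 8)
        a₄ := 0
        a₆ := 0 }
    ((∃ n : ℤ, (n : ℚ) = W.a₁) ∧ (∃ n : ℤ, (n : ℚ) = W.a₂) ∧ (∃ n : ℤ, (n : ℚ) = W.a₃)) ∧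
    W.Δ = ((a ^ 2 * b ^ 6 * (a + 9 * b) * (a + b) ^ 3 : ℤ) : ℚ) / 2 ^ 12 := by
  obtain ⟨c, hc⟩ := h8
  intro W
  constructor
  · refine ⟨⟨4 * c - b, ?_⟩, ⟨-(2 * b * c), ?_⟩, ⟨-(a * b * c), ?_⟩⟩
    · show _ = ((a - b : ℤ) : ℚ) / 2
      have : a - b = 2 * (4 * c - b) := by linarith
      rw [this]; push_cast; ring
    · show _ = -(((b * (a + b) : ℤ) : ℚ) / 4)
      rw [hc]; push_cast; ring
    · show _ = -(((a * b * (a + b) : ℤ) : ℚ) / 8)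
      rw [hc]; push_cast; ring
  · show W.Δ = _
    simp only [W, WeierstrassCurve.Δ, WeierstrassCurve.b₂, WeierstrassCurve.b₄,
      WeierstrassCurve.b₆, WeierstrassCurve.b₈]
    push_cast
    field_simp
    ring
end
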